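/- arXiv:1001.1528 — 9 statements merged into one kernel-verified Lean document; each statement's English description precedes it below -/
import Mathlib

section
/- Let q₀ ∈ (0, π/2), c₀ ∈ (0, q₀/2), and let c₁, c₂ > 0 satisfy 3πc₂/c₁ < min{q₀, c₀}. Let s > 0, let Γ ⊆ ℝ² satisfy Γ ∩ closedBall(0, c₁·s) = ∅, and let x ∈ ℝ² with ‖x‖ ≤ c₂·s. Then RG_{q₀,c₀}(Γ) ⊆ RG_{q₀/2,c₀/2,x}(Γ); that is, every (q₀,c₀)-regeneration site of Γ as seen from the origin is a (q₀/2,c₀/2)-regeneration site of Γ as seen from the observation point x. -/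
/-!
Moving the observer from `0` to `x` turns the direction of a point `w` with `‖x‖ ≤ ‖w‖` by an
angle of at most `(π/2) ‖x‖ / ‖w‖` (law of sines and Jordan's inequality); on `Γ` this tilt is
below `(π/2) c₂ / c₁`. The cones `W`, `C^F`, `C^B` are cut out by angle conditions, and `perp`
preserves angles, so by the triangle inequality for angles every inclusion in the definition of a
regeneration site survives the move once the apertures are relaxed by twice the tilt, which the
hypothesis on `c₁, c₂` keeps below `q₀ / 2` and `c₀ / 2`.
-/

open InnerProductGeometry Real Set Metric Pointwise RealInnerProductSpace

/-- `v` rotated counterclockwise by `π/2`. -/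
noncomputable def perp (v : EuclideanSpace ℝ (Fin 2)) : EuclideanSpace ℝ (Fin 2) :=
  (WithLp.equiv 2 (Fin 2 → ℝ)).symm ![-(v 1), v 0]

/-- The forward cone `C^F_{π/2 - q}(v)`. -/
noncomputable def coneF (q : ℝ) (v : EuclideanSpace ℝ (Fin 2)) :
    Set (EuclideanSpace ℝ (Fin 2)) :=
  {v} ∪ {w | w ≠ v ∧ angle (w - v) (perp v) ≤ π / 2 - q}

/-- The backward cone `C^B_{π/2 - q}(v)`. -/
noncomputable def coneB (q : ℝ) (v : EuclideanSpace ℝ (Fin 2)) :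
    Set (EuclideanSpace ℝ (Fin 2)) :=
  {v} ∪ {w | w ≠ v ∧ angle (w - v) (-(perp v)) ≤ π / 2 - q}

/-- The cone `W_{v,c}` about direction `v` with apex `0` and half-aperture `c`. -/
noncomputable def coneW (v : EuclideanSpace ℝ (Fin 2)) (c : ℝ) :
    Set (EuclideanSpace ℝ (Fin 2)) :=
  {0} ∪ {z | z ≠ 0 ∧ angle z v ≤ c}

/-- The set of `(q,c)`-regeneration sites of `Γ`, as seen from the origin. -/
noncomputable def RG (q c : ℝ) (Γ : Set (EuclideanSpace ℝ (Fin 2))) :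
    Set (EuclideanSpace ℝ (Fin 2)) :=
  {v | v ∈ Γ ∧ v ≠ 0 ∧ Γ ∩ coneW v c ⊆ coneF q v ∪ coneB q v}

/-- The set of `(q,c)`-regeneration sites of `Γ` as seen from `x`:
`RG_{q,c,x}(Γ) = x + RG_{q,c}(Γ - x)`. -/
noncomputable def RGat (q c : ℝ) (x : EuclideanSpace ℝ (Fin 2))
    (Γ : Set (EuclideanSpace ℝ (Fin 2))) : Set (EuclideanSpace ℝ (Fin 2)) :=
  (fun z => x + z) '' RG q c ((fun z => z - x) '' Γ)

section TiltBound

variable {V : Type*} [NormedAddCommGroup V] [InnerProductSpace ℝ V]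

lemma angle_sub_le_pi_div_two_of_norm_le {w x : V} (hxw : ‖x‖ ≤ ‖w‖) :
    angle w (w - x) ≤ π / 2 := by
  have hinner : 0 ≤ ⟪w, w - x⟫ := by
    rw [inner_sub_right, real_inner_self_eq_norm_mul_norm]
    nlinarith [real_inner_le_norm w x, norm_nonneg x]
  exact Real.arccos_le_pi_div_two.2 (div_nonneg hinner (by positivity))

lemma angle_sub_mul_norm_le {w x : V} (hxw : ‖x‖ ≤ ‖w‖) :
    angle w (w - x) * ‖w‖ ≤ π / 2 * ‖x‖ := by
  set θ := angle w (w - x)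
  -- law of sines in the triangle `0, x, w`
  have hsin : Real.sin θ * ‖w‖ ≤ ‖x‖ := by
    rw [sin_angle_mul_norm_eq_sin_angle_mul_norm, sub_sub_cancel]
    exact mul_le_of_le_one_left (norm_nonneg x) (Real.sin_le_one _)
  have hjordan : 2 / π * θ ≤ Real.sin θ :=
    Real.mul_le_sin (angle_nonneg _ _) (angle_sub_le_pi_div_two_of_norm_le hxw)
  have hπ := Real.pi_pos
  calc θ * ‖w‖ = π / 2 * (2 / π * θ * ‖w‖) := by field_simp
    _ ≤ π / 2 * ‖x‖ := by gcongr; nlinarith [norm_nonneg w]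

end TiltBound

lemma inner_perp_perp (u v : EuclideanSpace ℝ (Fin 2)) : ⟪perp u, perp v⟫ = ⟪u, v⟫ := by
  simp only [EuclideanSpace.inner_eq_star_dotProduct, perp, dotProduct, Fin.sum_univ_two,
    WithLp.equiv_symm_apply, Matrix.cons_val_zero, Matrix.cons_val_one, Matrix.cons_val_fin_one,
    Pi.star_apply, star_trivial]
  ring

lemma angle_perp_perp (u v : EuclideanSpace ℝ (Fin 2)) : angle (perp u) (perp v) = angle u v := by
  simp only [angle, norm_eq_sqrt_real_inner, inner_perp_perp]

section Translation

variable {Γ : Set (EuclideanSpace ℝ (Fin 2))} {v w x : EuclideanSpace ℝ (Fin 2)} {q q' c c' δ : ℝ}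

lemma sub_mem_coneF (hw : w ∈ coneF q v) (hv : angle v (v - x) ≤ q - q') :
    w - x ∈ coneF q' (v - x) := by
  rcases hw with rfl | ⟨hwv, hang⟩
  · exact Or.inl rfl
  refine Or.inr ⟨sub_left_injective.ne hwv, ?_⟩
  calc angle (w - x - (v - x)) (perp (v - x))
      ≤ angle (w - v) (perp v) + angle (perp v) (perp (v - x)) := by
        rw [sub_sub_sub_cancel_right]; exact angle_le_angle_add_angle _ _ _
    _ ≤ π / 2 - q' := by rw [angle_perp_perp]; linarith

lemma sub_mem_coneB (hw : w ∈ coneB q v) (hv : angle v (v - x) ≤ q - q') :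
    w - x ∈ coneB q' (v - x) := by
  rcases hw with rfl | ⟨hwv, hang⟩
  · exact Or.inl rfl
  refine Or.inr ⟨sub_left_injective.ne hwv, ?_⟩
  calc angle (w - x - (v - x)) (-perp (v - x))
      ≤ angle (w - v) (-perp v) + angle (-perp v) (-perp (v - x)) := by
        rw [sub_sub_sub_cancel_right]; exact angle_le_angle_add_angle _ _ _
    _ ≤ π / 2 - q' := by rw [angle_neg_neg, angle_perp_perp]; linarith

lemma mem_coneW_of_sub_mem_coneW (hw : w - x ∈ coneW (v - x) c') (hwx : w ≠ x)
    (htilt : angle w (w - x) + angle v (v - x) ≤ c - c') : w ∈ coneW v c := by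
  rcases hw with hw | ⟨-, hang⟩
  · exact absurd (sub_eq_zero.1 hw) hwx
  by_cases hw0 : w = 0
  · exact Or.inl hw0
  refine Or.inr ⟨hw0, ?_⟩
  have h₁ := angle_le_angle_add_angle w (w - x) v
  have h₂ := angle_le_angle_add_angle (w - x) (v - x) v
  rw [angle_comm (v - x)] at h₂
  linarith

theorem RG_subset_RGat_of_forall_angle_le (hq : δ ≤ q - q') (hc : 2 * δ ≤ c - c')
    (hΓ : ∀ w ∈ Γ, w ≠ x ∧ angle w (w - x) ≤ δ) : RG q c Γ ⊆ RGat q' c' x Γ := by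
  rintro v ⟨hvΓ, -, hvreg⟩
  obtain ⟨hvx, hvδ⟩ := hΓ v hvΓ
  refine ⟨v - x, ⟨⟨v, hvΓ, rfl⟩, sub_ne_zero.2 hvx, ?_⟩, add_sub_cancel x v⟩
  rintro _ ⟨⟨w, hwΓ, rfl⟩, hwW⟩
  obtain ⟨hwx, hwδ⟩ := hΓ w hwΓ
  rcases hvreg ⟨hwΓ, mem_coneW_of_sub_mem_coneW hwW hwx (by linarith)⟩ with hF | hB
  · exact Or.inl (sub_mem_coneF hF (by linarith))
  · exact Or.inr (sub_mem_coneB hB (by linarith))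

end Translation

theorem stmt0_general (q₀ c₀ c₁ c₂ s : ℝ)
    (hq₀' : q₀ < π / 2)
    (hc₁ : 0 < c₁) (hc₂ : 0 < c₂) (hcc : 3 * π * c₂ / c₁ < min q₀ c₀) (hs : 0 < s)
    (Γ : Set (EuclideanSpace ℝ (Fin 2)))
    (hΓ : Γ ∩ closedBall 0 (c₁ * s) = ∅)
    (x : EuclideanSpace ℝ (Fin 2)) (hx : ‖x‖ ≤ c₂ * s) :
    RG q₀ c₀ Γ ⊆ RGat (q₀ / 2) (c₀ / 2) x Γ := by
  set r := c₂ / c₁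
  have hr_min : 3 * π * r < min q₀ c₀ := by rwa [← mul_div_assoc]
  have hr_q := hr_min.trans_le (min_le_left _ _)
  have hr_c := hr_min.trans_le (min_le_right _ _)
  have hr : 0 ≤ r := div_nonneg hc₂.le hc₁.le
  have hπr : 0 ≤ π * r := mul_nonneg Real.pi_pos.le hr
  have hr_one : r < 1 := by nlinarith [Real.pi_pos]
  have hx' : ‖x‖ ≤ r * (c₁ * s) := by rwa [← mul_assoc, div_mul_cancel₀ _ hc₁.ne']
  have hΓ_far : ∀ w ∈ Γ, c₁ * s < ‖w‖ := fun w hw =>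
    lt_of_not_ge fun h => hΓ.subset ⟨hw, mem_closedBall_zero_iff.2 h⟩
  refine RG_subset_RGat_of_forall_angle_le (δ := π / 2 * r) (by linarith) (by linarith)
    fun w hw => ?_
  have hxw : ‖x‖ < ‖w‖ := calc
    ‖x‖ ≤ r * (c₁ * s) := hx'
    _ ≤ c₁ * s := mul_le_of_le_one_left (by positivity) hr_one.le
    _ < ‖w‖ := hΓ_far w hw
  refine ⟨fun h => (h ▸ hxw).false, le_of_mul_le_mul_right ?_ (norm_nonneg x |>.trans_lt hxw)⟩
  calc angle w (w - x) * ‖w‖ ≤ π / 2 * ‖x‖ := angle_sub_mul_norm_le hxw.le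
    _ ≤ π / 2 * r * ‖w‖ := by
      rw [mul_assoc]; gcongr; exact hx'.trans (by gcongr; exact (hΓ_far w hw).le)

/-- Every `(q₀,c₀)`-regeneration site of `Γ` as seen from the origin is a
`(q₀/2,c₀/2)`-regeneration site of `Γ` as seen from the observation point `x`. -/
theorem stmt0 (q₀ c₀ c₁ c₂ s : ℝ)
    (hq₀ : 0 < q₀) (hq₀' : q₀ < π / 2) (hc₀ : 0 < c₀) (hc₀' : c₀ < q₀ / 2)
    (hc₁ : 0 < c₁) (hc₂ : 0 < c₂) (hcc : 3 * π * c₂ / c₁ < min q₀ c₀) (hs : 0 < s)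
    (Γ : Set (EuclideanSpace ℝ (Fin 2)))
    (hΓ : Γ ∩ closedBall 0 (c₁ * s) = ∅)
    (x : EuclideanSpace ℝ (Fin 2)) (hx : ‖x‖ ≤ c₂ * s) :
    RG q₀ c₀ Γ ⊆ RGat (q₀ / 2) (c₀ / 2) x Γ :=
  stmt0_general q₀ c₀ c₁ c₂ s hq₀' hc₁ hc₂ hcc hs Γ hΓ x hx
end

section
/- Let c₀ ∈ (0, π/2) and let c₁, c₂, s > 0 satisfy 3πc₂ < c₀·c₁. Let x, v ∈ ℝ² satisfy ‖x‖ ≤ c₂·s and ‖v‖ ≥ c₁·s. Then (x + W_{v−x, c₀/2}) ∩ (ℝ² \ closedBall(0, c₁·s)) ⊆ W_{v, c₀}; that is, every point of the cone with apex x and axis direction v−x and half-aperture c₀/2 that lies outside the closed ball of radius c₁·s about the origin belongs to the cone with apex 0, axis direction v and half-aperture c₀. -/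
/-!
Write `y = x + z`. By the triangle inequality for angles,
`∠(y, v) ≤ ∠(y, z) + ∠(z, v - x) + ∠(v - x, v)`, and the middle term is at most `c₀/2`.
In each outer term the two vectors differ by `x`, of norm `≤ c₂ s`, while the first one has
norm `≥ c₁ s`; by Jordan's inequality `sin θ ≥ 2θ/π` such a pair spans an angle of at most
`(π/2) c₂/c₁ < c₀/6`.
-/

open InnerProductGeometry Real Set Metric Pointwise RealInnerProductSpace

namespace InnerProductGeometry

variable {V : Type*} [NormedAddCommGroup V] [InnerProductSpace ℝ V]

-- `‖a‖ sin ∠(a, b)` is the distance from `a` to the line `ℝ b`.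
lemma norm_mul_sin_angle_le_norm_sub (a b : V) : ‖a‖ * sin (angle a b) ≤ ‖a - b‖ := by
  rcases eq_or_ne b 0 with rfl | hb
  · simp
  have hb' : 0 < ‖b‖ := norm_pos_iff.2 hb
  have key : sin (angle a b) * (‖a‖ * ‖b‖) ≤ ‖a - b‖ * ‖b‖ := by
    rw [sin_angle_mul_norm_mul_norm, ← Real.sqrt_sq (by positivity : 0 ≤ ‖a - b‖ * ‖b‖)]
    refine Real.sqrt_le_sqrt ?_
    rw [mul_pow, norm_sub_sq_real, real_inner_self_eq_norm_sq, real_inner_self_eq_norm_sq]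
    nlinarith [sq_nonneg (‖b‖ ^ 2 - ⟪a, b⟫)]
  nlinarith

lemma angle_le_pi_div_two_of_norm_sub_le {a b : V} (h : ‖a - b‖ ≤ ‖a‖) :
    angle a b ≤ π / 2 := by
  have hinner : 0 ≤ ⟪a, b⟫ := by
    have := norm_sub_sq_real a b
    nlinarith [norm_nonneg (a - b), sq_nonneg ‖b‖]
  exact Real.arccos_le_pi_div_two.2 (div_nonneg hinner (by positivity))

lemma norm_mul_angle_le_of_norm_sub_le {a b : V} (h : ‖a - b‖ ≤ ‖a‖) :
    ‖a‖ * angle a b ≤ π / 2 * ‖a - b‖ := by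
  have jordan := Real.mul_le_sin (angle_nonneg a b) (angle_le_pi_div_two_of_norm_sub_le h)
  calc ‖a‖ * angle a b = π / 2 * (‖a‖ * (2 / π * angle a b)) := by field_simp
    _ ≤ π / 2 * (‖a‖ * sin (angle a b)) := by gcongr
    _ ≤ π / 2 * ‖a - b‖ := by gcongr; exact norm_mul_sin_angle_le_norm_sub a b

end InnerProductGeometry

theorem stmt1_general (c₀ c₁ c₂ s : ℝ) (hc₀ : 0 < c₀) (hc₀' : c₀ < π / 2)
    (hc₁ : 0 < c₁) (hs : 0 < s) (h : 3 * π * c₂ < c₀ * c₁)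
    (x v : EuclideanSpace ℝ (Fin 2)) (hx : ‖x‖ ≤ c₂ * s) (hv : c₁ * s ≤ ‖v‖) :
    ((fun z => x + z) '' coneW (v - x) (c₀ / 2)) ∩
      (closedBall (0 : EuclideanSpace ℝ (Fin 2)) (c₁ * s))ᶜ ⊆ coneW v c₀ := by
  have hc₁s : 0 < c₁ * s := mul_pos hc₁ hs
  have hc₂c₁ : c₂ * s ≤ c₁ * s := by gcongr; nlinarith [pi_pos]
  have small_angle (a b : EuclideanSpace ℝ (Fin 2)) (ha : c₁ * s ≤ ‖a‖)
      (hab : ‖a - b‖ ≤ c₂ * s) : 6 * angle a b ≤ c₀ := by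
    have hangle := norm_mul_angle_le_of_norm_sub_le (hab.trans (hc₂c₁.trans ha))
    have : ‖a‖ * (6 * angle a b) < ‖a‖ * c₀ :=
      calc ‖a‖ * (6 * angle a b) ≤ 3 * π * ‖a - b‖ := by linarith
        _ ≤ 3 * π * c₂ * s := by rw [mul_assoc _ c₂]; gcongr
        _ < c₀ * c₁ * s := by gcongr
        _ ≤ ‖a‖ * c₀ := by nlinarith
    exact (lt_of_mul_lt_mul_left this (norm_nonneg a)).le
  rintro _ ⟨⟨z, hz, rfl⟩, hfar⟩
  beta_reduce at hfar ⊢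
  rw [mem_compl_iff, mem_closedBall, dist_zero_right, not_le] at hfar
  rcases hz with rfl | ⟨-, hz⟩
  · rw [add_zero] at hfar
    linarith
  refine Or.inr ⟨norm_pos_iff.1 (hc₁s.trans hfar), ?_⟩
  have h₁ := small_angle (x + z) z hfar.le (by rwa [add_sub_cancel_right])
  have h₂ := small_angle v (v - x) hv (by rwa [sub_sub_cancel])
  linarith [angle_le_angle_add_angle (x + z) z v, angle_le_angle_add_angle z (v - x) v,
    angle_comm v (v - x)]

/-- Every point of the cone with apex `x`, axis direction `v - x` and half-aperture `c₀/2`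
lying outside the closed ball of radius `c₁ * s` about the origin belongs to the cone
with apex `0`, axis direction `v` and half-aperture `c₀`. -/
theorem stmt1 (c₀ c₁ c₂ s : ℝ) (hc₀ : 0 < c₀) (hc₀' : c₀ < π / 2)
    (hc₁ : 0 < c₁) (hc₂ : 0 < c₂) (hs : 0 < s) (h : 3 * π * c₂ < c₀ * c₁)
    (x v : EuclideanSpace ℝ (Fin 2)) (hx : ‖x‖ ≤ c₂ * s) (hv : c₁ * s ≤ ‖v‖) :
    ((fun z => x + z) '' coneW (v - x) (c₀ / 2)) ∩
      (closedBall (0 : EuclideanSpace ℝ (Fin 2)) (c₁ * s))ᶜ ⊆ coneW v c₀ :=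
  stmt1_general c₀ c₁ c₂ s hc₀ hc₀' hc₁ hs h x v hx hv
end

section
/- Let q ∈ (0, π/2] and c > 0 with q > 2c. Let x, y ∈ ℝ² with x ≠ 0, and suppose ∠(x,y) ≤ c and y ∈ C^F_{π/2−q}(x) ∪ C^B_{π/2−q}(x). Then ‖y − x‖ ≤ csc(q/2)·‖x‖·∠(x,y). -/
open InnerProductGeometry Real Set Metric Pointwise RealInnerProductSpace

/-!
In the triangle `0, x, y` the cone condition says that the angle at `x` lies in `[q, π - q]`,
while the angle at `0` is `∠(x,y) ≤ c < q/2`. Since the angles sum to `π`, the angle at `y`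
lies in `[q/2, π - q/2]`, so its sine is at least `sin(q/2)`. The law of sines then gives
`‖y - x‖ sin(q/2) ≤ ‖x‖ sin ∠(x,y) ≤ ‖x‖ ∠(x,y)`.
-/

lemma Real.sin_le_sin_of_le_of_le_pi_sub {a t : ℝ} (ha : 0 ≤ a) (hat : a ≤ t)
    (hta : t ≤ π - a) : sin a ≤ sin t := by
  rcases le_total t (π / 2) with ht | ht
  · exact sin_le_sin_of_le_of_le_pi_div_two (by linarith [pi_pos]) ht hat
  · rw [← sin_pi_sub t]
    exact sin_le_sin_of_le_of_le_pi_div_two (by linarith [pi_pos]) (by linarith) (by linarith)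

namespace InnerProductGeometry

variable {V : Type*} [NormedAddCommGroup V] [InnerProductSpace ℝ V]

lemma angle_mem_Icc_of_inner_eq_zero {x u w : V} {q : ℝ} (hxu : ⟪x, u⟫ = 0)
    (hwu : angle w u ≤ π / 2 - q) : angle w x ∈ Icc q (π - q) := by
  have hx : angle x u = π / 2 := (inner_eq_zero_iff_angle_eq_pi_div_two x u).1 hxu
  have h₁ := angle_le_angle_add_angle x w u
  have h₂ := angle_le_angle_add_angle (-x) w u
  rw [angle_comm x w] at h₁
  rw [angle_neg_left, angle_neg_left, angle_comm x w] at h₂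
  constructor <;> linarith

lemma norm_sub_le_of_angle_sub_mem_Icc {q : ℝ} {x y : V} (hq : 0 < q)
    (hyx : angle (y - x) x ∈ Icc q (π - q)) (hxy : angle x y ≤ q / 2) :
    ‖y - x‖ ≤ (sin (q / 2))⁻¹ * ‖x‖ * angle x y := by
  have hq' : q ≤ π / 2 := by linarith [hyx.1, hyx.2]
  have hy : y ≠ 0 := by
    rintro rfl
    rw [angle_zero_right] at hxy
    linarith
  have hsum := angle_add_angle_sub_add_angle_sub_eq_pi x hy
  have hx : angle x (x - y) = π - angle (y - x) x := by
    rw [← neg_sub y x, angle_neg_right, angle_comm]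
  have hsin : sin (q / 2) ≤ sin (angle y (y - x)) :=
    sin_le_sin_of_le_of_le_pi_sub (by linarith) (by linarith [hyx.1, angle_nonneg x y])
      (by linarith [hyx.2, angle_nonneg x y])
  have hsines : sin (angle y (y - x)) * ‖y - x‖ = sin (angle x y) * ‖x‖ := by
    rw [sin_angle_mul_norm_eq_sin_angle_mul_norm x y, ← neg_sub y x, angle_neg_right,
      sin_pi_sub, norm_neg]
  have hpos : 0 < sin (q / 2) := sin_pos_of_pos_of_lt_pi (by linarith) (by linarith [pi_pos])
  rw [mul_assoc, inv_mul_eq_div, le_div_iff₀ hpos]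
  calc ‖y - x‖ * sin (q / 2) ≤ sin (angle y (y - x)) * ‖y - x‖ := by
        rw [mul_comm]; exact mul_le_mul_of_nonneg_right hsin (norm_nonneg _)
    _ = sin (angle x y) * ‖x‖ := hsines
    _ ≤ ‖x‖ * angle x y := by
        rw [mul_comm]; exact mul_le_mul_of_nonneg_left (sin_le (angle_nonneg x y)) (norm_nonneg _)

end InnerProductGeometry

lemma inner_self_perp (v : EuclideanSpace ℝ (Fin 2)) : ⟪v, perp v⟫ = 0 := by
  simp [PiLp.inner_apply, Fin.sum_univ_two, perp, mul_comm]

lemma angle_sub_mem_Icc_of_mem_coneF_union_coneB {q : ℝ} {x y : EuclideanSpace ℝ (Fin 2)}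
    (hy : y ∈ coneF q x ∪ coneB q x) : y = x ∨ angle (y - x) x ∈ Icc q (π - q) := by
  rcases hy with (hy | ⟨-, hy⟩) | (hy | ⟨-, hy⟩)
  · exact .inl hy
  · exact .inr (angle_mem_Icc_of_inner_eq_zero (inner_self_perp x) hy)
  · exact .inl hy
  · have hx : ⟪x, -perp x⟫ = 0 := by rw [inner_neg_right, inner_self_perp, neg_zero]
    exact .inr (angle_mem_Icc_of_inner_eq_zero hx hy)

theorem stmt2_general (q c : ℝ) (hq : 0 < q) (hqc : 2 * c < q)
    (x y : EuclideanSpace ℝ (Fin 2))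
    (hangle : angle x y ≤ c) (hy : y ∈ coneF q x ∪ coneB q x) :
    ‖y - x‖ ≤ (Real.sin (q / 2))⁻¹ * ‖x‖ * angle x y := by
  rcases angle_sub_mem_Icc_of_mem_coneF_union_coneB hy with rfl | hyx
  · rcases eq_or_ne y 0 with rfl | hy0 <;> simp [angle_self, *]
  · exact norm_sub_le_of_angle_sub_mem_Icc hq hyx (by linarith)

/-- If `∠(x,y) ≤ c` and `y` lies in the union of the forward and backward cones at `x`
with parameter `q > 2c`, then `‖y - x‖ ≤ csc(q/2) · ‖x‖ · ∠(x,y)`. -/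
theorem stmt2 (q c : ℝ) (hq : 0 < q) (hq' : q ≤ π / 2) (hc : 0 < c) (hqc : 2 * c < q)
    (x y : EuclideanSpace ℝ (Fin 2)) (hx : x ≠ 0)
    (hangle : angle x y ≤ c) (hy : y ∈ coneF q x ∪ coneB q x) :
    ‖y - x‖ ≤ (Real.sin (q / 2))⁻¹ * ‖x‖ * angle x y :=
  stmt2_general q c hq hqc x y hangle hy
end

section
/- Let r > 0, θ > 0, and let k, l be nonnegative integers with l ≥ k + 2 and (l+1)·θ ≤ π. Let u, v ∈ ℝ² be nonzero with ‖u‖ ≥ r, ‖v‖ ≥ r, and suppose k·θ ≤ arg u ≤ (k+1)·θ and l·θ ≤ arg v ≤ (l+1)·θ. Then ‖v − u‖ ≥ (2/π)·(l − k − 1)·θ·r. (That is: two points of norm at least r lying in angular sectors of aperture θ that are at least two sectors apart are at Euclidean distance at least (2/π)·(l−k−1)·θ·r.) -/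
/-!
With `δ = arg v - arg u`, the law of cosines reads
`‖v - u‖² = (‖v‖ - ‖u‖)² + 4‖u‖‖v‖ sin²(δ/2) ≥ (2r sin(δ/2))²`, and Jordan's inequality
`sin x ≥ 2x/π` on `[0, π/2]` turns this into `‖v - u‖ ≥ (2/π) δ r` whenever `0 ≤ δ ≤ π`.
The sector hypotheses give `(l - k - 1)θ ≤ δ ≤ π`.
-/

open Real ComplexConjugate

namespace Complex

theorem re_mul_conj_eq_norm_mul_norm_mul_cos_arg_sub (u v : ℂ) :
    (v * conj u).re = ‖u‖ * ‖v‖ * Real.cos (v.arg - u.arg) := by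
  rw [Real.cos_sub, mul_re, conj_re, conj_im, ← norm_mul_cos_arg u, ← norm_mul_cos_arg v,
    ← norm_mul_sin_arg u, ← norm_mul_sin_arg v]
  ring

theorem sq_norm_sub_eq_sq_sub_add_sin_sq (u v : ℂ) :
    ‖v - u‖ ^ 2 = (‖v‖ - ‖u‖) ^ 2 + 4 * ‖u‖ * ‖v‖ * Real.sin ((v.arg - u.arg) / 2) ^ 2 := by
  have hcos : Real.cos (v.arg - u.arg) = 1 - 2 * Real.sin ((v.arg - u.arg) / 2) ^ 2 := by
    rw [← Real.cos_two_mul_eq_one_sub, mul_div_cancel₀ _ two_ne_zero]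
  rw [Complex.sq_norm, normSq_sub, re_mul_conj_eq_norm_mul_norm_mul_cos_arg_sub, hcos,
    ← Complex.sq_norm, ← Complex.sq_norm]
  ring

theorem two_mul_mul_abs_sin_le_norm_sub {r : ℝ} {u v : ℂ} (hr : 0 ≤ r) (hur : r ≤ ‖u‖)
    (hvr : r ≤ ‖v‖) : 2 * r * |Real.sin ((v.arg - u.arg) / 2)| ≤ ‖v - u‖ := by
  rw [← abs_of_nonneg hr, ← abs_two, ← abs_mul, ← abs_mul]
  refine abs_le_of_sq_le_sq ?_ (norm_nonneg _)
  have hrr : r * r ≤ ‖u‖ * ‖v‖ := mul_le_mul hur hvr hr (hr.trans hur)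
  rw [sq_norm_sub_eq_sq_sub_add_sin_sq]
  nlinarith [sq_nonneg (‖v‖ - ‖u‖), sq_nonneg (Real.sin ((v.arg - u.arg) / 2))]

theorem two_div_pi_mul_arg_sub_mul_le_norm_sub {r : ℝ} {u v : ℂ} (hr : 0 ≤ r) (hur : r ≤ ‖u‖)
    (hvr : r ≤ ‖v‖) (harg : u.arg ≤ v.arg) (harg' : v.arg - u.arg ≤ π) :
    2 / π * (v.arg - u.arg) * r ≤ ‖v - u‖ := by
  have hjordan := Real.mul_le_sin (x := (v.arg - u.arg) / 2) (by linarith) (by linarith)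
  calc 2 / π * (v.arg - u.arg) * r = 2 * r * (2 / π * ((v.arg - u.arg) / 2)) := by ring
    _ ≤ 2 * r * |Real.sin ((v.arg - u.arg) / 2)| := by gcongr; exact hjordan.trans (le_abs_self _)
    _ ≤ ‖v - u‖ := two_mul_mul_abs_sin_le_norm_sub hr hur hvr

end Complex

theorem stmt3_general (r θ : ℝ) (hr : 0 < r) (hθ : 0 < θ) (k l : ℕ) (hkl : k + 2 ≤ l)
    (hlθ : ((l : ℝ) + 1) * θ ≤ π) (u v : ℂ)
    (hur : r ≤ ‖u‖) (hvr : r ≤ ‖v‖)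
    (hau1 : (k : ℝ) * θ ≤ u.arg) (hau2 : u.arg ≤ ((k : ℝ) + 1) * θ)
    (hav1 : (l : ℝ) * θ ≤ v.arg) (hav2 : v.arg ≤ ((l : ℝ) + 1) * θ) :
    (2 / π) * ((l : ℝ) - (k : ℝ) - 1) * θ * r ≤ ‖v - u‖ := by
  have hkl' : (k : ℝ) + 2 ≤ l := by exact_mod_cast hkl
  have hsep : ((l : ℝ) - k - 1) * θ ≤ v.arg - u.arg := by linarith
  have hsep_nonneg : 0 ≤ ((l : ℝ) - k - 1) * θ := mul_nonneg (by linarith) hθ.le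
  have hkθ : 0 ≤ (k : ℝ) * θ := by positivity
  calc (2 / π) * ((l : ℝ) - k - 1) * θ * r = 2 / π * (((l : ℝ) - k - 1) * θ) * r := by ring
    _ ≤ 2 / π * (v.arg - u.arg) * r := by gcongr
    _ ≤ ‖v - u‖ :=
      Complex.two_div_pi_mul_arg_sub_mul_le_norm_sub hr.le hur hvr (by linarith) (by linarith)

/-- Two points of norm at least `r` lying in angular sectors of aperture `θ`
that are at least two sectors apart are at Euclidean distance at least
`(2/π)·(l - k - 1)·θ·r`. -/
theorem stmt3 (r θ : ℝ) (hr : 0 < r) (hθ : 0 < θ) (k l : ℕ) (hkl : k + 2 ≤ l)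
    (hlθ : ((l : ℝ) + 1) * θ ≤ π) (u v : ℂ) (hu : u ≠ 0) (hv : v ≠ 0)
    (hur : r ≤ ‖u‖) (hvr : r ≤ ‖v‖)
    (hau1 : (k : ℝ) * θ ≤ u.arg) (hau2 : u.arg ≤ ((k : ℝ) + 1) * θ)
    (hav1 : (l : ℝ) * θ ≤ v.arg) (hav2 : v.arg ≤ ((l : ℝ) + 1) * θ) :
    (2 / π) * ((l : ℝ) - (k : ℝ) - 1) * θ * r ≤ ‖v - u‖ :=
  stmt3_general r θ hr hθ k l hkl hlθ u v hur hvr hau1 hau2 hav1 hav2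
end

section
/- Let r, L > 0, let d ∈ ℝ² be a unit vector, and let ψ, φ > 0 satisfy ψ + φ ≤ π and L < (2/π)·r·φ. Set A := {0} ∪ {z ∈ ℝ² : z ≠ 0 and ∠(z,d) ≤ ψ}. Let Γ, Γ' ⊆ ℝ² be compact sets such that: Γ ∩ closedBall(0,r) = ∅ and Γ' ∩ closedBall(0,r) = ∅; closedBall(0,r) ⊆ convexHull ℝ Γ and closedBall(0,r) ⊆ convexHull ℝ Γ'; Γ \ A = Γ' \ A; every line segment [p,q] contained in the topological frontier of convexHull ℝ Γ satisfies ‖p − q‖ ≤ L, and likewise every line segment contained in the frontier of convexHull ℝ Γ' has length at most L. Then for every nonzero w ∈ ℝ² with ∠(w,d) ≥ ψ + φ, one has w ∈ frontier(convexHull ℝ Γ) if and only if w ∈ frontier(convexHull ℝ Γ'). -/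
/-!
A boundary point `u` of `conv Γ` lies in the convex hull of the points of `Γ` on a supporting
line at `u`. Each such point `x` spans with `u` a segment in the boundary, so `‖u - x‖ ≤ L`; as
both have norm at least `r`, Jordan's inequality turns this into `∠(u, x) < φ`, so `x` lies
outside the sector and belongs to `Γ'`. Hence `u ∈ conv Γ'`. If `u` were interior to `conv Γ'`,
the point `u / gauge (conv Γ') u` where the ray through `u` leaves `conv Γ'` would, by the same
argument, lie in `conv Γ`, and then `u` would be interior to `conv Γ`, whose interior contains `0`.
-/

open InnerProductGeometry Real Set Metric Pointwise RealInnerProductSpace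

section Chord

variable {V : Type*} [NormedAddCommGroup V] [InnerProductSpace ℝ V]

/-- Jordan's inequality `sin (θ / 2) ≥ θ / π` applied to the chord `2 r sin (θ / 2)`. -/
theorem two_div_pi_mul_mul_angle_le_norm_sub {x y : V} {r : ℝ} (hr : 0 ≤ r) (hx : r ≤ ‖x‖)
    (hy : r ≤ ‖y‖) : 2 / π * r * angle x y ≤ ‖x - y‖ := by
  set θ := angle x y
  have hθ : 0 ≤ θ / 2 := by linarith [angle_nonneg x y]
  have hθπ : θ / 2 ≤ π / 2 := by linarith [angle_le_pi x y]
  have hsin : 2 / π * (θ / 2) ≤ sin (θ / 2) := mul_le_sin hθ hθπ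
  have hsin0 : 0 ≤ sin (θ / 2) := sin_nonneg_of_nonneg_of_le_pi hθ (by linarith [pi_pos])
  have hcos : 1 - cos θ = 2 * sin (θ / 2) ^ 2 := by
    rw [sin_sq_eq_half_sub, show 2 * (θ / 2) = θ by ring]; ring
  have hlaw := norm_sub_sq_eq_norm_sq_add_norm_sq_sub_two_mul_norm_mul_norm_mul_cos_angle x y
  have hrr : r * r ≤ ‖x‖ * ‖y‖ := mul_le_mul hx hy hr (hr.trans hx)
  have hsq : (2 * r * sin (θ / 2)) ^ 2 ≤ ‖x - y‖ ^ 2 := by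
    nlinarith [sq_nonneg (‖x‖ - ‖y‖), sq_nonneg (sin (θ / 2))]
  calc 2 / π * r * θ = 2 * r * (2 / π * (θ / 2)) := by ring
    _ ≤ 2 * r * sin (θ / 2) := by gcongr
    _ ≤ ‖x - y‖ := (pow_le_pow_iff_left₀ (by positivity) (norm_nonneg _) two_ne_zero).1 hsq

end Chord

section CompactHull

variable {E : Type*} [NormedAddCommGroup E] [NormedSpace ℝ E] {s t : Set E}

theorem IsCompact.convexJoin (hs : IsCompact s) (ht : IsCompact t) :
    IsCompact (_root_.convexJoin ℝ s t) := by
  have : _root_.convexJoin ℝ s t =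
      (fun p : ℝ × E × E => AffineMap.lineMap p.2.1 p.2.2 p.1) '' (Icc 0 1 ×ˢ s ×ˢ t) := by
    ext x
    simp only [mem_convexJoin, segment_eq_image_lineMap, mem_image, mem_prod, Prod.exists]
    grind
  exact this ▸ (isCompact_Icc.prod (hs.prod ht)).image (by fun_prop)

theorem exists_isCompact_convexHull_finset_subset (hs : IsCompact s) (n : ℕ) :
    ∃ C, IsCompact C ∧ C ⊆ convexHull ℝ s ∧
      ∀ t : Finset E, ↑t ⊆ s → t.card ≤ n + 1 → convexHull ℝ ↑t ⊆ C := by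
  induction n with
  | zero =>
    refine ⟨s, hs, subset_convexHull ℝ s, fun t hts ht => ?_⟩
    obtain rfl | hne := t.eq_empty_or_nonempty
    · simp
    obtain ⟨a, rfl⟩ := Finset.card_eq_one.1 (le_antisymm ht (Finset.card_pos.2 hne))
    simpa using hts
  | succ n ih =>
    obtain ⟨C, hC, hCs, hCt⟩ := ih
    refine ⟨s ∪ convexJoin ℝ s C, hs.union (hs.convexJoin hC),
      union_subset (subset_convexHull ℝ s)
        (convexJoin_subset (subset_convexHull ℝ s) hCs (convex_convexHull ℝ s)),
      fun t hts ht => ?_⟩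
    classical
    obtain rfl | ⟨a, ha⟩ := t.eq_empty_or_nonempty
    · simp
    rw [← Finset.insert_erase ha, Finset.coe_insert]
    obtain he | hne := (t.erase a).eq_empty_or_nonempty
    · rw [he]
      simpa using subset_union_left (hts ha)
    rw [convexHull_insert (Finset.coe_nonempty.2 hne)]
    refine subset_union_of_subset_right (convexJoin_mono (by simpa using hts ha)
      (hCt _ ((Finset.coe_subset.2 (Finset.erase_subset a t)).trans hts) ?_)) _
    rw [Finset.card_erase_of_mem ha]
    omega

/-- By Carathéodory, in dimension `n` the hull is covered by the hulls of `n + 1` points. -/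
theorem IsCompact.convexHull [FiniteDimensional ℝ E] (hs : IsCompact s) :
    IsCompact (_root_.convexHull ℝ s) := by
  obtain ⟨C, hC, hCs, hCt⟩ := exists_isCompact_convexHull_finset_subset hs (Module.finrank ℝ E)
  convert hC
  refine hCs.antisymm' fun x hx => ?_
  rw [convexHull_eq_union] at hx
  simp only [mem_iUnion] at hx
  obtain ⟨t, hts, hti, hxt⟩ := hx
  refine hCt t hts ?_ hxt
  have := hti.card_le_finrank_succ
  rw [Fintype.card_coe] at this
  exact this.trans (Nat.succ_le_succ (Submodule.finrank_le _))

end CompactHull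

section Faces

theorem mem_convexHull_inter_preimage_of_le {E : Type*} [AddCommGroup E] [Module ℝ E]
    {s : Set E} {f : E →ₗ[ℝ] ℝ} {c : ℝ} (hs : ∀ x ∈ s, f x ≤ c) {w : E}
    (hw : w ∈ convexHull ℝ s) (hfw : f w = c) : w ∈ convexHull ℝ (s ∩ f ⁻¹' {c}) := by
  obtain ⟨ι, _, z, a, hzs, -, ha, ha1, rfl⟩ := eq_pos_convex_span_of_mem_convexHull hw
  have hgap : ∑ i, a i * (c - f (z i)) = 0 := by
    simp only [mul_sub, Finset.sum_sub_distrib, ← Finset.sum_mul, ha1, one_mul, ← hfw, map_sum,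
      map_smul, smul_eq_mul, sub_self]
  have hz : ∀ i, z i ∈ s ∩ f ⁻¹' {c} := fun i => by
    have hgap_i := (Finset.sum_eq_zero_iff_of_nonneg fun j _ =>
      mul_nonneg (ha j).le (sub_nonneg.2 (hs _ (hzs (mem_range_self j))))).1 hgap i
      (Finset.mem_univ i)
    exact ⟨hzs (mem_range_self i),
      (sub_eq_zero.1 ((mul_eq_zero.1 hgap_i).resolve_left (ha i).ne')).symm⟩
  exact (convex_convexHull ℝ _).sum_mem (fun i _ => (ha i).le) ha1
    fun i _ => subset_convexHull ℝ _ (hz i)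

/-- Take for `t` the points of `s` on a supporting hyperplane at `w`. -/
theorem exists_subset_mem_convexHull_subset_frontier {E : Type*} [NormedAddCommGroup E]
    [NormedSpace ℝ E] {s : Set E} (hs : IsClosed (convexHull ℝ s)) {w : E}
    (hw : w ∈ frontier (convexHull ℝ s)) :
    ∃ t ⊆ s, w ∈ convexHull ℝ t ∧ convexHull ℝ t ⊆ frontier (convexHull ℝ s) := by
  set K := convexHull ℝ s
  have hK : Convex ℝ K := convex_convexHull ℝ s
  rw [hs.frontier_eq] at hw ⊢
  obtain hint | hint := (interior K).eq_empty_or_nonempty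
  · exact ⟨s, subset_rfl, hw.1, by simp [K, hint]⟩
  obtain ⟨f, hf⟩ := geometric_hahn_banach_open_point hK.interior isOpen_interior hw.2
  have hfK : ∀ x ∈ K, f x ≤ f w := by
    intro x hx
    have : x ∈ closure (interior K) := by
      rw [hK.closure_interior_eq_closure_of_nonempty_interior hint]
      exact subset_closure hx
    exact closure_lt_subset_le f.continuous continuous_const
      (closure_mono (fun y hy => hf y hy) this)
  refine ⟨s ∩ (f : E →ₗ[ℝ] ℝ) ⁻¹' {f w}, inter_subset_left,
    mem_convexHull_inter_preimage_of_le (fun x hx => hfK x (subset_convexHull ℝ s hx)) hw.1 rfl,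
    fun x hx => ⟨convexHull_mono inter_subset_left hx, fun hxi => (hf x hxi).ne ?_⟩⟩
  have hfx := convexHull_mono inter_subset_right hx
  rwa [((convex_singleton (f w)).linear_preimage (f : E →ₗ[ℝ] ℝ)).convexHull_eq] at hfx

end Faces

section Sectors

variable {V : Type*} [NormedAddCommGroup V] [InnerProductSpace ℝ V]
  {r L ψ φ : ℝ} {d : V} {A Γ Γ' : Set V}

theorem mem_convexHull_of_mem_frontier_convexHull (hr : 0 < r) (hLφ : L < 2 / π * r * φ)
    (hK : IsClosed (convexHull ℝ Γ)) (hΓb : Γ ∩ closedBall 0 r = ∅)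
    (hΓh : closedBall 0 r ⊆ convexHull ℝ Γ) (hA : ∀ x, x ≠ 0 → ψ < angle x d → x ∉ A)
    (hagree : Γ \ A ⊆ Γ')
    (hfacet : ∀ p q : V, segment ℝ p q ⊆ frontier (convexHull ℝ Γ) → ‖p - q‖ ≤ L)
    {u : V} (hud : ψ + φ ≤ angle u d) (hu : u ∈ frontier (convexHull ℝ Γ)) :
    u ∈ convexHull ℝ Γ' := by
  obtain ⟨t, htΓ, hut, htfr⟩ := exists_subset_mem_convexHull_subset_frontier hK hu
  have hur : r ≤ ‖u‖ := by
    by_contra! h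
    exact hu.2 (interior_mono hΓh (ball_subset_interior_closedBall (by simpa using h)))
  refine convexHull_mono (fun x hx => hagree ⟨htΓ hx, ?_⟩) hut
  have hxr : r < ‖x‖ := by
    simpa using (Set.disjoint_iff_inter_eq_empty.2 hΓb).notMem_of_mem_left (htΓ hx)
  have hux : ‖u - x‖ ≤ L := hfacet u x
    (((convex_convexHull ℝ t).segment_subset hut (subset_convexHull ℝ t hx)).trans htfr)
  have hangle : angle u x < φ := by
    have := (two_div_pi_mul_mul_angle_le_norm_sub hr.le hur hxr.le).trans hux
    exact lt_of_mul_lt_mul_left (this.trans_lt hLφ) (by positivity)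
  refine hA x (norm_pos_iff.1 (hr.trans hxr)) ?_
  linarith [angle_le_angle_add_angle u x d]

theorem mem_frontier_convexHull_of_mem_frontier_convexHull (hr : 0 < r)
    (hLφ : L < 2 / π * r * φ) (hK : IsCompact (convexHull ℝ Γ))
    (hK' : IsCompact (convexHull ℝ Γ')) (hΓb : Γ ∩ closedBall 0 r = ∅)
    (hΓ'b : Γ' ∩ closedBall 0 r = ∅) (hΓh : closedBall 0 r ⊆ convexHull ℝ Γ)
    (hΓ'h : closedBall 0 r ⊆ convexHull ℝ Γ') (hA : ∀ x, x ≠ 0 → ψ < angle x d → x ∉ A)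
    (hagree : Γ \ A = Γ' \ A)
    (hfacet : ∀ p q : V, segment ℝ p q ⊆ frontier (convexHull ℝ Γ) → ‖p - q‖ ≤ L)
    (hfacet' : ∀ p q : V, segment ℝ p q ⊆ frontier (convexHull ℝ Γ') → ‖p - q‖ ≤ L)
    {w : V} (hwd : ψ + φ ≤ angle w d) (hw : w ∈ frontier (convexHull ℝ Γ)) :
    w ∈ frontier (convexHull ℝ Γ') := by
  set K := convexHull ℝ Γ
  set K' := convexHull ℝ Γ'
  have hK0 : K ∈ nhds 0 := Filter.mem_of_superset (closedBall_mem_nhds 0 hr) hΓh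
  have hK'0 : K' ∈ nhds 0 := Filter.mem_of_superset (closedBall_mem_nhds 0 hr) hΓ'h
  have hwK' : w ∈ K' := mem_convexHull_of_mem_frontier_convexHull hr hLφ hK.isClosed hΓb hΓh hA
    (hagree.subset.trans sdiff_subset) hfacet hwd hw
  rw [hK'.isClosed.frontier_eq]
  refine ⟨hwK', fun hwi => hw.2 ?_⟩
  set g := gauge K' w
  have hg1 : g < 1 := (gauge_lt_one_iff_mem_interior (convex_convexHull ℝ Γ') hK'0).2 hwi
  have hw0 : w ≠ 0 := by
    rintro rfl
    exact hw.2 (mem_interior_iff_mem_nhds.2 hK0)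
  have hg0 : 0 < g := (gauge_pos (absorbent_nhds_zero hK'0)
    ((NormedSpace.isVonNBounded_iff ℝ).2 hK'.isBounded)).2 hw0
  have hw'fr : g⁻¹ • w ∈ frontier K' := by
    rw [← gauge_eq_one_iff_mem_frontier (convex_convexHull ℝ Γ') hK'0,
      gauge_smul_of_nonneg (inv_nonneg.2 hg0.le), smul_eq_mul, inv_mul_cancel₀ hg0.ne']
  have hw'K : g⁻¹ • w ∈ K := mem_convexHull_of_mem_frontier_convexHull hr hLφ hK'.isClosed hΓ'b
    hΓ'h hA (hagree.symm.subset.trans sdiff_subset) hfacet'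
    (by rwa [angle_smul_left_of_pos _ _ (inv_pos.2 hg0)]) hw'fr
  rw [← gauge_lt_one_iff_mem_interior (convex_convexHull ℝ Γ) hK0]
  calc gauge K w = g * gauge K (g⁻¹ • w) := by
        rw [gauge_smul_of_nonneg (inv_nonneg.2 hg0.le), smul_eq_mul, ← mul_assoc,
          mul_inv_cancel₀ hg0.ne', one_mul]
    _ ≤ g * 1 := by gcongr; exact gauge_le_one_of_mem hw'K
    _ < 1 := by linarith

end Sectors

theorem stmt4_general (r L ψ φ : ℝ) (hr : 0 < r) (hLφ : L < (2 / π) * r * φ)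
    (d : EuclideanSpace ℝ (Fin 2))
    (Γ Γ' : Set (EuclideanSpace ℝ (Fin 2))) (hΓc : IsCompact Γ) (hΓ'c : IsCompact Γ')
    (hΓb : Γ ∩ closedBall 0 r = ∅) (hΓ'b : Γ' ∩ closedBall 0 r = ∅)
    (hΓh : closedBall 0 r ⊆ convexHull ℝ Γ) (hΓ'h : closedBall 0 r ⊆ convexHull ℝ Γ')
    (hagree : Γ \ coneW d ψ = Γ' \ coneW d ψ)
    (hfacet : ∀ p q : EuclideanSpace ℝ (Fin 2),
      segment ℝ p q ⊆ frontier (convexHull ℝ Γ) → ‖p - q‖ ≤ L)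
    (hfacet' : ∀ p q : EuclideanSpace ℝ (Fin 2),
      segment ℝ p q ⊆ frontier (convexHull ℝ Γ') → ‖p - q‖ ≤ L)
    (w : EuclideanSpace ℝ (Fin 2)) (hwd : ψ + φ ≤ angle w d) :
    w ∈ frontier (convexHull ℝ Γ) ↔ w ∈ frontier (convexHull ℝ Γ') := by
  have hA : ∀ x, x ≠ 0 → ψ < angle x d → x ∉ coneW d ψ := by
    rintro x hx0 hxψ (hx | ⟨-, hxψ'⟩)
    exacts [hx0 hx, hxψ.not_ge hxψ']
  exact ⟨mem_frontier_convexHull_of_mem_frontier_convexHull hr hLφ hΓc.convexHull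
      hΓ'c.convexHull hΓb hΓ'b hΓh hΓ'h hA hagree hfacet hfacet' hwd,
    mem_frontier_convexHull_of_mem_frontier_convexHull hr hLφ hΓ'c.convexHull
      hΓc.convexHull hΓ'b hΓb hΓ'h hΓh hA hagree.symm hfacet' hfacet hwd⟩

/-- If two compact sets encircling the ball of radius `r` agree outside the angular sector
`A` of half-aperture `ψ` about `d`, and all facets (maximal line segments in the boundary of
the convex hull) of both sets have length at most `L < (2/π)·r·φ`, then the boundaries of
their convex hulls agree at every point whose angular distance from `d` is at least `ψ + φ`. -/
theorem stmt4 (r L ψ φ : ℝ) (hr : 0 < r) (hL : 0 < L) (hψ : 0 < ψ) (hφ : 0 < φ)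
    (hψφ : ψ + φ ≤ π) (hLφ : L < (2 / π) * r * φ)
    (d : EuclideanSpace ℝ (Fin 2)) (hd : ‖d‖ = 1)
    (Γ Γ' : Set (EuclideanSpace ℝ (Fin 2))) (hΓc : IsCompact Γ) (hΓ'c : IsCompact Γ')
    (hΓb : Γ ∩ closedBall 0 r = ∅) (hΓ'b : Γ' ∩ closedBall 0 r = ∅)
    (hΓh : closedBall 0 r ⊆ convexHull ℝ Γ) (hΓ'h : closedBall 0 r ⊆ convexHull ℝ Γ')
    (hagree : Γ \ coneW d ψ = Γ' \ coneW d ψ)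
    (hfacet : ∀ p q : EuclideanSpace ℝ (Fin 2),
      segment ℝ p q ⊆ frontier (convexHull ℝ Γ) → ‖p - q‖ ≤ L)
    (hfacet' : ∀ p q : EuclideanSpace ℝ (Fin 2),
      segment ℝ p q ⊆ frontier (convexHull ℝ Γ') → ‖p - q‖ ≤ L)
    (w : EuclideanSpace ℝ (Fin 2)) (hw : w ≠ 0) (hwd : ψ + φ ≤ angle w d) :
    w ∈ frontier (convexHull ℝ Γ) ↔ w ∈ frontier (convexHull ℝ Γ') :=
  stmt4_general r L ψ φ hr hLφ d Γ Γ' hΓc hΓ'c hΓb hΓ'b hΓh hΓ'h hagree hfacet hfacet' w hwd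
end

section
/- Let Γ ⊆ ℝ² be a compact set and let C be a bounded connected component of ℝ² \ Γ. Then C ⊆ interior(convexHull ℝ Γ). -/
/-!
If a point of the component is not interior to a closed convex set `K ⊇ Γ`, then a nearby
point `y` of the same component lies outside `K`. A hyperplane separating `y` from `K` bounds
an open half-space through `y` that misses `Γ`, so the whole half-space lies in the component,
which is therefore unbounded. In finite dimension `K` may be taken to be the closure of the convex hull,
since a convex set and its closure have the same interior.
-/

open Set Metric Bornology

variable {E : Type*} [NormedAddCommGroup E] [NormedSpace ℝ E]

theorem not_isBounded_setOf_lt [Nontrivial E] (f : StrongDual ℝ E) {u : ℝ} {y : E}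
    (hy : u < f y) : ¬IsBounded {z | u < f z} := by
  obtain ⟨w, hw, hfw⟩ : ∃ w : E, w ≠ 0 ∧ 0 ≤ f w := by
    obtain ⟨w, hw⟩ := exists_ne (0 : E)
    rcases le_total 0 (f w) with h | h
    · exact ⟨w, hw, h⟩
    · exact ⟨-w, neg_ne_zero.2 hw, by simpa using h⟩
  intro hb
  obtain ⟨R, hR⟩ := isBounded_iff_forall_norm_le.1 hb
  have hw' : 0 < ‖w‖ := norm_pos_iff.2 hw
  set t := (R + ‖y‖ + 1) / ‖w‖
  have ht : 0 ≤ t := by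
    have hR0 := (norm_nonneg y).trans (hR y hy)
    positivity
  have hmem : y + t • w ∈ {z | u < f z} := by
    simp only [mem_ofPred_eq, map_add, map_smul, smul_eq_mul]
    linarith [mul_nonneg ht hfw]
  have hnorm : ‖t • w‖ = R + ‖y‖ + 1 := by
    rw [norm_smul, Real.norm_of_nonneg ht, div_mul_cancel₀ _ hw'.ne']
  have htriangle := norm_sub_le (y + t • w) y
  rw [add_sub_cancel_left] at htriangle
  linarith [hR _ hmem]

theorem Convex.interior_closure_eq_interior [FiniteDimensional ℝ E] {s : Set E}
    (hs : Convex ℝ s) : interior (closure s) = interior s := by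
  rcases (interior s).eq_empty_or_nonempty with h | h
  · rw [h, ← not_nonempty_iff_eq_empty, hs.closure.interior_nonempty_iff_affineSpan_eq_top,
      ← top_le_iff]
    intro htop
    rw [← not_nonempty_iff_eq_empty, hs.interior_nonempty_iff_affineSpan_eq_top] at h
    refine h (top_le_iff.1 (htop.trans (affineSpan_le.2 ?_)))
    exact closure_minimal (subset_affineSpan ℝ s) (affineSpan ℝ s).closed_of_finiteDimensional
  · exact hs.interior_closure_eq_interior_of_nonempty_interior h

section

variable {Γ K : Set E}

theorem not_isBounded_connectedComponentIn_compl_of_notMem [Nontrivial E] (hK : IsClosed K)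
    (hKc : Convex ℝ K) (hΓK : Γ ⊆ K) {y : E} (hy : y ∉ K) :
    ¬IsBounded (connectedComponentIn Γᶜ y) := by
  obtain ⟨f, u, hfK, hfy⟩ := geometric_hahn_banach_closed_point hKc hK hy
  have hH : {z | u < f z} ⊆ connectedComponentIn Γᶜ y :=
    (convex_halfSpace_gt f.isLinear u).isPreconnected.subset_connectedComponentIn hfy
      fun z hz hzΓ ↦ (hfK z (hΓK hzΓ)).not_gt hz
  exact fun hb ↦ not_isBounded_setOf_lt f hfy (hb.subset hH)

theorem exists_notMem_mem_connectedComponentIn_of_notMem_interior (hΓ : IsClosed Γ)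
    {x : E} (hx : x ∈ Γᶜ) (hxK : x ∉ interior K) : ∃ y ∉ K, y ∈ connectedComponentIn Γᶜ x := by
  obtain ⟨ε, hε, hball⟩ := isOpen_iff.1 hΓ.isOpen_compl x hx
  obtain ⟨y, hy, hyK⟩ := not_subset.1 fun h : ball x ε ⊆ K ↦
    hxK (mem_interior.2 ⟨_, h, isOpen_ball, mem_ball_self hε⟩)
  exact ⟨y, hyK, (convex_ball x ε).isPreconnected.subset_connectedComponentIn
    (mem_ball_self hε) hball hy⟩

theorem connectedComponentIn_compl_subset_interior [Nontrivial E] (hΓ : IsClosed Γ)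
    (hK : IsClosed K) (hKc : Convex ℝ K) (hΓK : Γ ⊆ K) {x : E}
    (hb : IsBounded (connectedComponentIn Γᶜ x)) :
    connectedComponentIn Γᶜ x ⊆ interior K := by
  intro z hz
  by_contra hzK
  obtain ⟨y, hyK, hy⟩ := exists_notMem_mem_connectedComponentIn_of_notMem_interior hΓ
    (connectedComponentIn_subset _ _ hz) hzK
  rw [connectedComponentIn_eq hz, connectedComponentIn_eq hy] at hb
  exact not_isBounded_connectedComponentIn_compl_of_notMem hK hKc hΓK hyK hb

end

/-- Any bounded connected component of the complement of a compact planar set `Γ`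
is contained in the interior of the convex hull of `Γ`. -/
theorem stmt5 (Γ : Set (EuclideanSpace ℝ (Fin 2))) (hΓ : IsCompact Γ)
    (C : Set (EuclideanSpace ℝ (Fin 2)))
    (hC : ∃ x ∈ Γᶜ, C = connectedComponentIn Γᶜ x)
    (hCb : Bornology.IsBounded C) :
    C ⊆ interior (convexHull ℝ Γ) := by
  obtain ⟨x, -, rfl⟩ := hC
  rw [← (convex_convexHull ℝ Γ).interior_closure_eq_interior]
  exact connectedComponentIn_compl_subset_interior hΓ.isClosed isClosed_closure
    (convex_convexHull ℝ Γ).closure ((subset_convexHull ℝ Γ).trans subset_closure) hCb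
end

section
/- Let v ∈ ℝ² be nonzero and let q ∈ (0, π). Then every point w in the topological frontier of C^F_{π/2−q/2}(v) ∪ C^B_{π/2−q/2}(v) satisfies ‖w‖ ≥ ‖v‖·sin(q/2). In other words, the distance from the origin to the boundary of the union of the forward and backward cones at v is at least ‖v‖·sin(q/2). -/
/-!
With `t = q/2` and `u = w - v`, membership of `w` in one of the two cones says that `u` makes an angle of
at most `π/2 - t` with `±v^⊥`, i.e. `sin t * ‖u‖ * ‖v‖ ≤ |⟪u, v^⊥⟫|`. Since
`⟪u, v^⊥⟫² + ⟪u, v⟫² = ‖u‖²‖v‖²` in the plane, this says that the sine of the angle between `u`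
and `v` is at least `sin t`, so the whole line through `v` in direction `u` stays at distance at
least `‖v‖ sin t` from the origin. Hence the union of the cones lies in the closed set
`{x | ‖v‖ sin t ≤ ‖x‖}`, and so do its closure and its frontier.
-/

open InnerProductGeometry Real Set Metric Pointwise RealInnerProductSpace

lemma perp_apply_zero (v : EuclideanSpace ℝ (Fin 2)) : perp v 0 = -v 1 := by
  simp [perp]

lemma perp_apply_one (v : EuclideanSpace ℝ (Fin 2)) : perp v 1 = v 0 := by
  simp [perp]

lemma norm_perp (v : EuclideanSpace ℝ (Fin 2)) : ‖perp v‖ = ‖v‖ := by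
  simp only [EuclideanSpace.norm_eq, Fin.sum_univ_two, perp_apply_zero, perp_apply_one,
    Real.norm_eq_abs, sq_abs, neg_sq, add_comm]

lemma inner_perp_sq_add_inner_sq (u v : EuclideanSpace ℝ (Fin 2)) :
    ⟪u, perp v⟫ ^ 2 + ⟪u, v⟫ ^ 2 = (‖u‖ * ‖v‖) ^ 2 := by
  simp only [mul_pow, EuclideanSpace.real_norm_sq_eq, PiLp.inner_apply, RCLike.inner_apply,
    conj_trivial, Fin.sum_univ_two, perp_apply_zero, perp_apply_one]
  ring

section InnerProductSpace

variable {E : Type*} [NormedAddCommGroup E] [InnerProductSpace ℝ E]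

lemma sin_mul_le_inner_of_angle_le {u p : E} {t : ℝ} (ht : -(π / 2) ≤ t)
    (h : angle u p ≤ π / 2 - t) : sin t * (‖u‖ * ‖p‖) ≤ ⟪u, p⟫ := by
  rw [← cos_angle_mul_norm_mul_norm, ← cos_pi_div_two_sub]
  gcongr
  exact cos_le_cos_of_nonneg_of_le_pi (angle_nonneg u p) (by linarith) h

/-- If the angle between `u` and `v` has sine at least `σ`, the line through `v` in direction `u`
stays at distance at least `σ * ‖v‖` from the origin. -/
lemma mul_norm_le_norm_add_of_inner_sq_le {u v : E} {σ : ℝ} (hσ₀ : 0 ≤ σ) (hσ₁ : σ ≤ 1)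
    (h : ⟪u, v⟫ ^ 2 ≤ (1 - σ ^ 2) * (‖u‖ * ‖v‖) ^ 2) : σ * ‖v‖ ≤ ‖v + u‖ := by
  have hc : 0 ≤ 1 - σ ^ 2 := by nlinarith
  -- AM-GM: `4 ⟪u, v⟫² ≤ 4 (1 - σ²) ‖u‖² ‖v‖² ≤ ((1 - σ²) ‖v‖² + ‖u‖²)²`
  have hinner : -((1 - σ ^ 2) * ‖v‖ ^ 2 + ‖u‖ ^ 2) ≤ 2 * ⟪u, v⟫ :=
    (abs_le_of_sq_le_sq' (by nlinarith [sq_nonneg ((1 - σ ^ 2) * ‖v‖ ^ 2 - ‖u‖ ^ 2)])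
      (add_nonneg (mul_nonneg hc (sq_nonneg _)) (sq_nonneg _))).1
  have hsq : (σ * ‖v‖) ^ 2 ≤ ‖v + u‖ ^ 2 := by
    rw [norm_add_sq_real, real_inner_comm]
    linarith
  exact (pow_le_pow_iff_left₀ (by positivity) (norm_nonneg _) two_ne_zero).1 hsq

end InnerProductSpace

lemma sin_mul_le_abs_inner_perp_of_mem_coneF_union_coneB {v w : EuclideanSpace ℝ (Fin 2)}
    {t : ℝ} (ht : -(π / 2) ≤ t) (hw : w ∈ coneF t v ∪ coneB t v) :
    sin t * (‖w - v‖ * ‖v‖) ≤ |⟪w - v, perp v⟫| := by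
  rcases hw with (rfl | ⟨-, hF⟩) | (rfl | ⟨-, hB⟩)
  · simp
  · have h := sin_mul_le_inner_of_angle_le ht hF
    rw [norm_perp] at h
    exact h.trans (le_abs_self _)
  · simp
  · have h := sin_mul_le_inner_of_angle_le ht hB
    rw [norm_neg, norm_perp, inner_neg_right] at h
    exact h.trans (neg_le_abs _)

lemma mul_sin_le_norm_of_mem_coneF_union_coneB {v w : EuclideanSpace ℝ (Fin 2)} {t : ℝ}
    (ht : -(π / 2) ≤ t) (hw : w ∈ coneF t v ∪ coneB t v) : ‖v‖ * sin t ≤ ‖w‖ := by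
  rcases le_or_gt (sin t) 0 with hsin | hsin
  · exact (mul_nonpos_of_nonneg_of_nonpos (norm_nonneg v) hsin).trans (norm_nonneg w)
  have habs := pow_le_pow_left₀ (by positivity)
    (sin_mul_le_abs_inner_perp_of_mem_coneF_union_coneB ht hw) 2
  have hsin_angle : ⟪w - v, v⟫ ^ 2 ≤ (1 - sin t ^ 2) * (‖w - v‖ * ‖v‖) ^ 2 := by
    rw [sq_abs] at habs
    linarith [inner_perp_sq_add_inner_sq (w - v) v]
  have h := mul_norm_le_norm_add_of_inner_sq_le hsin.le (sin_le_one t) hsin_angle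
  rwa [add_sub_cancel, mul_comm] at h

theorem stmt7_general (v : EuclideanSpace ℝ (Fin 2)) (q : ℝ)
    (hq : 0 < q)
    (w : EuclideanSpace ℝ (Fin 2))
    (hw : w ∈ frontier (coneF (q / 2) v ∪ coneB (q / 2) v)) :
    ‖v‖ * Real.sin (q / 2) ≤ ‖w‖ := by
  have hcones : coneF (q / 2) v ∪ coneB (q / 2) v ⊆ {x | ‖v‖ * sin (q / 2) ≤ ‖x‖} :=
    fun x hx => mul_sin_le_norm_of_mem_coneF_union_coneB (by linarith [pi_pos]) hx
  exact closure_minimal hcones (isClosed_le continuous_const continuous_norm)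
    (frontier_subset_closure hw)

/-- The distance from the origin to the boundary of the union of the forward and
backward cones `C^F_{π/2 - q/2}(v) ∪ C^B_{π/2 - q/2}(v)` is at least `‖v‖·sin(q/2)`. -/
theorem stmt7 (v : EuclideanSpace ℝ (Fin 2)) (hv : v ≠ 0) (q : ℝ)
    (hq : 0 < q) (hq' : q < π)
    (w : EuclideanSpace ℝ (Fin 2))
    (hw : w ∈ frontier (coneF (q / 2) v ∪ coneB (q / 2) v)) :
    ‖v‖ * Real.sin (q / 2) ≤ ‖w‖ :=
  stmt7_general v q hq w hw
end

section
/- Let a, b, c ∈ ℝ² be three pairwise distinct points, let α := ∠(c − a, b − a) be the angle of the triangle at a and β := ∠(c − b, a − b) the angle at b, and suppose α + β ≤ π/2. Then the Lebesgue measure of convexHull ℝ {a, b, c} is at most (1/2)·‖b − a‖²·sin(α + β). -/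
/-!
Bound the triangle by the parallelogram spanned by `u = b - a` and `v = c - a`, whose area is
`|ω u v| = sin α ‖v‖‖u‖ = sin β ‖c - b‖‖u‖` (`ω` the area form). Projecting onto `u` gives
`‖u‖ = cos α ‖v‖ + cos β ‖c - b‖`, hence `sin α sin β ‖u‖² = |ω u v| sin (α + β)`, and the claim
reduces to `2 sin α sin β ≤ sin² (α + β)`, which holds as soon as `cos (α + β) ≥ 0`.
-/

open Real InnerProductGeometry MeasureTheory
open scoped RealInnerProductSpace Pointwise

theorem Real.two_mul_sin_mul_sin_le_sin_add_sq {x y : ℝ} (h : 0 ≤ cos (x + y)) :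
    2 * sin x * sin y ≤ sin (x + y) ^ 2 := by
  -- `2 sin x sin y = cos (x - y) - cos (x + y) ≤ 1 - cos (x + y) ≤ 1 - cos² (x + y)`
  nlinarith [cos_sub x y, cos_add x y, sin_sq_add_cos_sq (x + y), cos_le_one (x - y),
    mul_nonneg h (sub_nonneg.2 (cos_le_one (x + y)))]

namespace Orientation

variable {E : Type*} [NormedAddCommGroup E] [InnerProductSpace ℝ E] [Fact (Module.finrank ℝ E = 2)]
  (o : Orientation ℝ E (Fin 2))

theorem abs_areaForm_eq_sin_angle_mul_norm_mul_norm (x y : E) :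
    |o.areaForm x y| = sin (angle x y) * (‖x‖ * ‖y‖) := by
  rw [sin_angle_mul_norm_mul_norm, ← sqrt_sq_eq_abs, real_inner_self_eq_norm_sq,
    real_inner_self_eq_norm_sq]
  congr 1
  linear_combination o.inner_sq_add_areaForm_sq x y

theorem sin_angle_mul_sin_angle_mul_norm_sq (a b c : E) :
    sin (angle (c - a) (b - a)) * sin (angle (c - b) (a - b)) * ‖b - a‖ ^ 2 =
      |o.areaForm (b - a) (c - a)| * sin (angle (c - a) (b - a) + angle (c - b) (a - b)) := by
  set α := angle (c - a) (b - a)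
  set β := angle (c - b) (a - b)
  have hAα : |o.areaForm (b - a) (c - a)| = sin α * (‖c - a‖ * ‖b - a‖) := by
    rw [← abs_areaForm_eq_sin_angle_mul_norm_mul_norm, o.areaForm_swap, abs_neg]
  have hAβ : |o.areaForm (b - a) (c - a)| = sin β * (‖c - b‖ * ‖b - a‖) := by
    have hω : o.areaForm (c - b) (a - b) = o.areaForm (b - a) (c - a) := by
      rw [show c - b = (c - a) - (b - a) by abel, show a - b = -(b - a) by abel]
      simp only [map_sub, map_neg, LinearMap.sub_apply, o.areaForm_apply_self]
      rw [o.areaForm_swap b c, o.areaForm_swap a c]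
      ring
    rw [← norm_neg (b - a), neg_sub, ← abs_areaForm_eq_sin_angle_mul_norm_mul_norm, hω]
  have hcα : cos α * (‖c - a‖ * ‖b - a‖) = ⟪c - a, b - a⟫ := cos_angle_mul_norm_mul_norm _ _
  have hcβ : cos β * (‖c - b‖ * ‖b - a‖) = ⟪c - b, a - b⟫ := by
    rw [← norm_sub_rev a b]
    exact cos_angle_mul_norm_mul_norm _ _
  have hproj : ‖b - a‖ ^ 2 = cos α * (‖c - a‖ * ‖b - a‖) + cos β * (‖c - b‖ * ‖b - a‖) := by
    rw [hcα, hcβ, ← real_inner_self_eq_norm_sq, show a - b = -(b - a) by abel, inner_neg_right,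
      ← sub_eq_add_neg, ← inner_sub_left, sub_sub_sub_cancel_left]
  rw [sin_add]
  linear_combination (sin α * sin β) * hproj - sin β * cos α * hAα - sin α * cos β * hAβ

theorem two_mul_abs_areaForm_le_of_angle_add_angle_le_pi_div_two {a b c : E}
    (h : angle (c - a) (b - a) + angle (c - b) (a - b) ≤ π / 2) :
    2 * |o.areaForm (b - a) (c - a)| ≤
      ‖b - a‖ ^ 2 * sin (angle (c - a) (b - a) + angle (c - b) (a - b)) := by
  have hkey := o.sin_angle_mul_sin_angle_mul_norm_sq a b c
  set α := angle (c - a) (b - a)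
  set β := angle (c - b) (a - b)
  have hα : 0 ≤ α := angle_nonneg _ _
  have hβ : 0 ≤ β := angle_nonneg _ _
  have hS : 0 ≤ sin (α + β) := sin_nonneg_of_nonneg_of_le_pi (by linarith) (by linarith [pi_pos])
  have htrig : 2 * sin α * sin β ≤ sin (α + β) ^ 2 :=
    two_mul_sin_mul_sin_le_sin_add_sq (cos_nonneg_of_mem_Icc ⟨by linarith [pi_pos], h⟩)
  rcases hS.eq_or_lt with hS0 | hS0
  · have hαβ : α + β = 0 :=
      (sin_eq_zero_iff_of_lt_of_lt (by linarith [pi_pos]) (by linarith [pi_pos])).1 hS0.symm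
    have hα0 : α = 0 := by linarith
    rw [o.areaForm_swap, abs_neg, abs_areaForm_eq_sin_angle_mul_norm_mul_norm, ← hS0]
    change 2 * (sin α * _) ≤ _
    simp [hα0]
  · refine le_of_mul_le_mul_left ?_ hS0
    nlinarith [mul_le_mul_of_nonneg_right htrig (sq_nonneg ‖b - a‖)]

theorem volume_convexHull_triple_le [FiniteDimensional ℝ E] [MeasurableSpace E] [BorelSpace E]
    (a b c : E) :
    volume (convexHull ℝ ({a, b, c} : Set E)) ≤ ENNReal.ofReal |o.areaForm (b - a) (c - a)| := by
  have htranslate : ({a, b, c} : Set E) = a +ᵥ ({0, b - a, c - a} : Set E) := by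
    simp [Set.vadd_set_insert]
  have hsub : ({0, b - a, c - a} : Set E) ⊆ ∑ i, {0, ![b - a, c - a] i} := by
    simp [Fin.sum_univ_two, Set.insert_subset_iff, Set.mem_add]
  calc volume (convexHull ℝ ({a, b, c} : Set E))
      = volume (convexHull ℝ {0, b - a, c - a}) := by
        rw [htranslate, convexHull_vadd, measure_vadd]
    _ ≤ volume (parallelepiped ![b - a, c - a]) := by
        rw [parallelepiped_eq_convexHull]
        exact measure_mono (convexHull_mono hsub)
    _ = ENNReal.ofReal |o.areaForm (b - a) (c - a)| := by
        rw [← o.measure_eq_volume, AlternatingMap.measure_parallelepiped, o.areaForm_to_volumeForm]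

end Orientation

theorem stmt11_general (a b c : EuclideanSpace ℝ (Fin 2))
    (h : angle (c - a) (b - a) + angle (c - b) (a - b) ≤ π / 2) :
    MeasureTheory.volume (convexHull ℝ ({a, b, c} : Set (EuclideanSpace ℝ (Fin 2)))) ≤
      ENNReal.ofReal ((1 / 2) * ‖b - a‖ ^ 2 *
        Real.sin (angle (c - a) (b - a) + angle (c - b) (a - b))) := by
  have : Fact (Module.finrank ℝ (EuclideanSpace ℝ (Fin 2)) = 2) := ⟨finrank_euclideanSpace_fin⟩
  let o := (EuclideanSpace.basisFun (Fin 2) ℝ).toBasis.orientation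
  calc volume (convexHull ℝ {a, b, c})
      ≤ ENNReal.ofReal |o.areaForm (b - a) (c - a)| := o.volume_convexHull_triple_le a b c
    _ ≤ _ := by
        gcongr
        linarith [o.two_mul_abs_areaForm_le_of_angle_add_angle_le_pi_div_two h]

/-- If the angles of a triangle at `a` and `b` sum to at most `π/2`, then the area of the
triangle is at most `(1/2)·‖b - a‖²·sin(α + β)`. -/
theorem stmt11 (a b c : EuclideanSpace ℝ (Fin 2))
    (hab : a ≠ b) (hac : a ≠ c) (hbc : b ≠ c)
    (h : angle (c - a) (b - a) + angle (c - b) (a - b) ≤ π / 2) :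
    MeasureTheory.volume (convexHull ℝ ({a, b, c} : Set (EuclideanSpace ℝ (Fin 2)))) ≤
      ENNReal.ofReal ((1 / 2) * ‖b - a‖ ^ 2 *
        Real.sin (angle (c - a) (b - a) + angle (c - b) (a - b))) :=
  stmt11_general a b c h
end

section
/- Let K ⊆ ℝ² be a compact convex set with 0 ∈ interior(K). Let m := min{z₁ : z ∈ K} be the minimal first coordinate over K, and suppose this minimum is attained at a unique point p ∈ K. Then for every δ > 0 there exists ε ∈ (0,1) such that every z ∈ (1+ε)•K with z₁ ≤ (1−ε)·m satisfies |z₂ − p₂| ≤ δ. -/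
/-!
A point of `(1 + ε) • K` lies within `ε · sup ‖K‖` of a point `w ∈ K`, so the constraint
`z₁ ≤ (1 - ε) m` forces `w₁ ≤ m + O(ε)`. By compactness, points of `K` whose first coordinate
is almost minimal are close to the unique minimizer `p`, and so is `z`.
-/

open Pointwise Topology Set

/-- The gap `t` is half the gap between `f p` and the minimum of `f` on the compact `K \ V`,
for an open `V ∋ p` inside `U`. -/
theorem IsCompact.exists_pos_forall_le_add_mem {X : Type*} [TopologicalSpace X] {K : Set X}
    (hK : IsCompact K) {f : X → ℝ} (hf : ContinuousOn f K) {p : X}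
    (hmin : ∀ z ∈ K, f p ≤ f z) (huniq : ∀ z ∈ K, f z = f p → z = p)
    {U : Set X} (hU : U ∈ 𝓝 p) : ∃ t > 0, ∀ w ∈ K, f w ≤ f p + t → w ∈ U := by
  obtain ⟨V, hVU, hVo, hpV⟩ := mem_nhds_iff.mp hU
  have hgap : ∀ z ∈ K \ V, f p < f z := fun z hz =>
    (hmin z hz.1).lt_of_ne fun h => hz.2 (huniq z hz.1 h.symm ▸ hpV)
  obtain ⟨a, hpa, ha⟩ := (hK.diff hVo).exists_forall_le' (hf.mono sdiff_subset) hgap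
  refine ⟨(a - f p) / 2, by linarith, fun w hw hfw => hVU ?_⟩
  by_contra hwV
  linarith [ha w ⟨hw, hwV⟩]

theorem exists_mem_norm_sub_le_of_mem_one_add_smul {E : Type*} [SeminormedAddCommGroup E]
    [NormedSpace ℝ E] {K : Set E} {M ε : ℝ} (hε : 0 ≤ ε) (hM : ∀ w ∈ K, ‖w‖ ≤ M) {z : E}
    (hz : z ∈ (1 + ε) • K) : ∃ w ∈ K, ‖z - w‖ ≤ ε * M := by
  obtain ⟨w, hw, rfl⟩ := hz
  refine ⟨w, hw, ?_⟩
  rw [show (1 + ε) • w - w = ε • w by module, norm_smul, Real.norm_of_nonneg hε]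
  exact mul_le_mul_of_nonneg_left (hM w hw) hε

theorem stmt16_general (K : Set (EuclideanSpace ℝ (Fin 2))) (hK : IsCompact K)
    (p : EuclideanSpace ℝ (Fin 2)) (hp : p ∈ K)
    (hmin : ∀ z ∈ K, p 0 ≤ z 0)
    (huniq : ∀ z ∈ K, z 0 = p 0 → z = p)
    (δ : ℝ) (hδ : 0 < δ) :
    ∃ ε : ℝ, 0 < ε ∧ ε < 1 ∧
      ∀ z ∈ (1 + ε) • K, z 0 ≤ (1 - ε) * p 0 → |z 1 - p 1| ≤ δ := by
  obtain ⟨M, hM0, hM⟩ := hK.isBounded.exists_pos_norm_le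
  obtain ⟨t, ht, hclose⟩ := hK.exists_pos_forall_le_add_mem (f := fun z => z 0)
    (by fun_prop) hmin huniq (U := {w | |w 1 - p 1| < δ / 2})
    ((isOpen_lt (by fun_prop) continuous_const).mem_nhds (by simpa using half_pos hδ))
  set ε := min (1 / 2) (min t δ / (2 * M))
  have hε : 0 < ε := by positivity
  have hεM : ε * M ≤ min t δ / 2 := by
    calc ε * M ≤ min t δ / (2 * M) * M := by gcongr; exact min_le_right _ _
      _ = min t δ / 2 := by field_simp
  refine ⟨ε, hε, (min_le_left _ _).trans_lt (by norm_num), fun z hz hz0 => ?_⟩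
  obtain ⟨w, hw, hzw⟩ := exists_mem_norm_sub_le_of_mem_one_add_smul hε.le hM hz
  have hzw_apply (i : Fin 2) : |z i - w i| ≤ ε * M := (PiLp.norm_apply_le (z - w) i).trans hzw
  have hp0 : ε * -p 0 ≤ ε * M := by
    gcongr
    exact (neg_le_abs _).trans ((PiLp.norm_apply_le p 0).trans (hM p hp))
  have hw0 : w 0 ≤ p 0 + t := by
    linarith [(abs_le.mp (hzw_apply 0)).1, min_le_left t δ]
  have hw1 : |w 1 - p 1| < δ / 2 := hclose w hw hw0
  calc |z 1 - p 1| ≤ |z 1 - w 1| + |w 1 - p 1| := abs_sub_le _ _ _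
    _ ≤ δ := by linarith [hzw_apply 1, min_le_right t δ]

/-- Stability of the leftmost point of a compact convex planar body under dilation:
if the minimal first coordinate over `K` is attained at the unique point `p`, then for
every `δ > 0` there is `ε ∈ (0,1)` such that every point of `(1+ε)•K` whose first
coordinate is at most `(1-ε)` times the minimum has second coordinate within `δ`
of that of `p`. -/
theorem stmt16 (K : Set (EuclideanSpace ℝ (Fin 2))) (hK : IsCompact K) (hKc : Convex ℝ K)
    (h0 : (0 : EuclideanSpace ℝ (Fin 2)) ∈ interior K)
    (p : EuclideanSpace ℝ (Fin 2)) (hp : p ∈ K)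
    (hmin : ∀ z ∈ K, p 0 ≤ z 0)
    (huniq : ∀ z ∈ K, z 0 = p 0 → z = p)
    (δ : ℝ) (hδ : 0 < δ) :
    ∃ ε : ℝ, 0 < ε ∧ ε < 1 ∧
      ∀ z ∈ (1 + ε) • K, z 0 ≤ (1 - ε) * p 0 → |z 1 - p 1| ≤ δ :=
  stmt16_general K hK p hp hmin huniq δ hδ
end
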